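/- Let P ⊂ ℝ³ be a nonempty finite point cloud, w : ℝ² × ℝ² → [0,∞) a weight function with Σ_{(x,y,z)∈P} w(x,y,x_i*,y_j*) > 0 for every (i,j), let x_1 ≤ … ≤ x_{n_x+p_x+1} and y_1 ≤ … ≤ y_{n_y+p_y+1} be nondecreasing knot vectors, and let B_{ij} : ℝ² → ℝ satisfy: (a) B_{ij}(x,y) = 0 whenever x ∉ [x_i, x_{i+p_x+1}) or y ∉ [y_j, y_{j+p_y+1}); (b) B_{ij} ≥ 0 everywhere; (c) Σ_{ij} B_{ij}(x,y) = 1 at the point (x,y) under consideration. Fix x ∈ [x_μ, x_{μ+1}) and y ∈ [y_ν, y_{ν+1}) with p_x+1 ≤ μ ≤ n_x and p_y+1 ≤ ν ≤ n_y, and set P_{μ,ν} := {(x',y',z') ∈ P : w(x',y',x_i*,y_j*) ≠ 0 for some i ∈ {μ−p_x,…,μ} and j ∈ {ν−p_y,…,ν}}. Then P_{μ,ν} is nonempty and min_{(x',y',z')∈P_{μ,ν}} z' ≤ f_w(x,y) ≤ max_{(x',y',z')∈P_{μ,ν}} z'. -/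
import Mathlib


open Classical in
/-- Control point estimator of a point cloud `P ⊂ ℝ³` with weight function `w`. -/
noncomputable def zhat (P : Finset (ℝ × ℝ × ℝ)) (w : ℝ → ℝ → ℝ → ℝ → ℝ) (u v : ℝ) : ℝ :=
  (∑ p ∈ P, p.2.2 * w p.1 p.2.1 u v) / (∑ p ∈ P, w p.1 p.2.1 u v)

open Classical in
/-- The set `P_{μ,ν}` of points of the cloud `P` whose weight is nonzero at some knot
average `(xs i, ys j)` with `μ - px ≤ i ≤ μ` and `ν - py ≤ j ≤ ν`. -/
noncomputable def Pmunu (P : Finset (ℝ × ℝ × ℝ)) (w : ℝ → ℝ → ℝ → ℝ → ℝ)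
    (xs ys : ℕ → ℝ) (px py μ ν : ℕ) : Finset (ℝ × ℝ × ℝ) :=
  P.filter (fun p => ∃ i ∈ Finset.Icc (μ - px) μ, ∃ j ∈ Finset.Icc (ν - py) ν,
    w p.1 p.2.1 (xs i) (ys j) ≠ 0)

theorem stmt_4 (P : Finset (ℝ × ℝ × ℝ)) (hP : P.Nonempty)
    (w : ℝ → ℝ → ℝ → ℝ → ℝ) (hw : ∀ x y u v, 0 ≤ w x y u v)
    (nx ny px py : ℕ) (xs ys : ℕ → ℝ)
    (hden : ∀ i ∈ Finset.Icc 1 nx, ∀ j ∈ Finset.Icc 1 ny,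
      0 < ∑ p ∈ P, w p.1 p.2.1 (xs i) (ys j))
    (xk yk : ℕ → ℝ)
    (hxk : ∀ i ∈ Finset.Icc 1 (nx + px), xk i ≤ xk (i + 1))
    (hyk : ∀ j ∈ Finset.Icc 1 (ny + py), yk j ≤ yk (j + 1))
    (B : ℕ → ℕ → ℝ → ℝ → ℝ)
    (hsupp : ∀ i ∈ Finset.Icc 1 nx, ∀ j ∈ Finset.Icc 1 ny, ∀ x y : ℝ,
      (x ∉ Set.Ico (xk i) (xk (i + px + 1)) ∨ y ∉ Set.Ico (yk j) (yk (j + py + 1))) →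
      B i j x y = 0)
    (μ ν : ℕ) (hμ1 : px + 1 ≤ μ) (hμ2 : μ ≤ nx) (hν1 : py + 1 ≤ ν) (hν2 : ν ≤ ny)
    (x y : ℝ) (hx : x ∈ Set.Ico (xk μ) (xk (μ + 1))) (hy : y ∈ Set.Ico (yk ν) (yk (ν + 1)))
    (hBnonneg : ∀ i j, 0 ≤ B i j x y)
    (hBsum : ∑ i ∈ Finset.Icc 1 nx, ∑ j ∈ Finset.Icc 1 ny, B i j x y = 1) :
    ∃ hne : (Pmunu P w xs ys px py μ ν).Nonempty,
      (Pmunu P w xs ys px py μ ν).inf' hne (fun p => p.2.2)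
        ≤ ∑ i ∈ Finset.Icc 1 nx, ∑ j ∈ Finset.Icc 1 ny, zhat P w (xs i) (ys j) * B i j x y ∧
      (∑ i ∈ Finset.Icc 1 nx, ∑ j ∈ Finset.Icc 1 ny, zhat P w (xs i) (ys j) * B i j x y)
        ≤ (Pmunu P w xs ys px py μ ν).sup' hne (fun p => p.2.2) := by
  classical
  have hμIcc : μ ∈ Finset.Icc 1 nx := Finset.mem_Icc.2 ⟨by omega, hμ2⟩
  have hνIcc : ν ∈ Finset.Icc 1 ny := Finset.mem_Icc.2 ⟨by omega, hν2⟩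
  -- nonemptiness
  have hne : (Pmunu P w xs ys px py μ ν).Nonempty := by
    have hpos := hden μ hμIcc ν hνIcc
    obtain ⟨p, hp, hwp⟩ : ∃ p ∈ P, w p.1 p.2.1 (xs μ) (ys ν) ≠ 0 := by
      by_contra h
      push_neg at h
      have : ∑ p ∈ P, w p.1 p.2.1 (xs μ) (ys ν) = 0 := Finset.sum_eq_zero h
      linarith
    exact ⟨p, Finset.mem_filter.2 ⟨hp, μ, Finset.mem_Icc.2 ⟨Nat.sub_le _ _, le_rfl⟩,
      ν, Finset.mem_Icc.2 ⟨Nat.sub_le _ _, le_rfl⟩, hwp⟩⟩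
  set m := (Pmunu P w xs ys px py μ ν).inf' hne (fun p => p.2.2) with hm
  set M := (Pmunu P w xs ys px py μ ν).sup' hne (fun p => p.2.2) with hM
  -- monotonicity of knots
  have xmono : ∀ a b : ℕ, 1 ≤ a → a ≤ b → b ≤ nx + px + 1 → xk a ≤ xk b := by
    intro a b ha hab hb
    induction b with
    | zero => omega
    | succ n ih =>
      rcases Nat.lt_or_ge a (n + 1) with h | h
      · exact le_trans (ih (by omega) (by omega))
          (hxk n (Finset.mem_Icc.2 ⟨by omega, by omega⟩))
      · have : a = n + 1 := by omega
        rw [this]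
  have ymono : ∀ a b : ℕ, 1 ≤ a → a ≤ b → b ≤ ny + py + 1 → yk a ≤ yk b := by
    intro a b ha hab hb
    induction b with
    | zero => omega
    | succ n ih =>
      rcases Nat.lt_or_ge a (n + 1) with h | h
      · exact le_trans (ih (by omega) (by omega))
          (hyk n (Finset.mem_Icc.2 ⟨by omega, by omega⟩))
      · have : a = n + 1 := by omega
        rw [this]
  -- which (i,j) can have nonzero B
  have hBzero : ∀ i ∈ Finset.Icc 1 nx, ∀ j ∈ Finset.Icc 1 ny, B i j x y ≠ 0 →
      i ∈ Finset.Icc (μ - px) μ ∧ j ∈ Finset.Icc (ν - py) ν := by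
    intro i hi j hj hB
    have hix : x ∈ Set.Ico (xk i) (xk (i + px + 1)) ∧ y ∈ Set.Ico (yk j) (yk (j + py + 1)) := by
      by_contra h
      exact hB (hsupp i hi j hj x y (by tauto))
    rw [Finset.mem_Icc] at hi hj
    constructor
    · rw [Finset.mem_Icc]
      constructor
      · by_contra h
        push_neg at h
        have h1 : i + px + 1 ≤ μ := by omega
        have : xk (i + px + 1) ≤ xk μ := xmono _ _ (by omega) h1 (by omega)
        have := hix.1.2
        have := hx.1
        linarith
      · by_contra h
        push_neg at h
        have : xk (μ + 1) ≤ xk i := xmono _ _ (by omega) (by omega) (by omega)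
        have := hix.1.1
        have := hx.2
        linarith
    · rw [Finset.mem_Icc]
      constructor
      · by_contra h
        push_neg at h
        have h1 : j + py + 1 ≤ ν := by omega
        have : yk (j + py + 1) ≤ yk ν := ymono _ _ (by omega) h1 (by omega)
        have := hix.2.2
        have := hy.1
        linarith
      · by_contra h
        push_neg at h
        have : yk (ν + 1) ≤ yk j := ymono _ _ (by omega) (by omega) (by omega)
        have := hix.2.1
        have := hy.2
        linarith
  -- key estimate on zhat
  have key : ∀ i ∈ Finset.Icc (μ - px) μ, ∀ j ∈ Finset.Icc (ν - py) ν,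
      m ≤ zhat P w (xs i) (ys j) ∧ zhat P w (xs i) (ys j) ≤ M := by
    intro i hi j hj
    rw [Finset.mem_Icc] at hi hj
    have hi' : i ∈ Finset.Icc 1 nx := Finset.mem_Icc.2 ⟨by omega, by omega⟩
    have hj' : j ∈ Finset.Icc 1 ny := Finset.mem_Icc.2 ⟨by omega, by omega⟩
    have hd := hden i hi' j hj'
    have hsub : ∀ p ∈ P, w p.1 p.2.1 (xs i) (ys j) ≠ 0 → p ∈ Pmunu P w xs ys px py μ ν :=
      fun p hp hwp => Finset.mem_filter.2 ⟨hp, i, Finset.mem_Icc.2 hi, j, Finset.mem_Icc.2 hj, hwp⟩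
    constructor
    · rw [zhat, le_div_iff₀ hd, Finset.mul_sum]
      refine Finset.sum_le_sum fun p hp => ?_
      rcases eq_or_ne (w p.1 p.2.1 (xs i) (ys j)) 0 with h0 | h0
      · simp [h0]
      · exact mul_le_mul_of_nonneg_right (Finset.inf'_le _ (hsub p hp h0)) (hw _ _ _ _)
    · rw [zhat, div_le_iff₀ hd, Finset.mul_sum]
      refine Finset.sum_le_sum fun p hp => ?_
      rcases eq_or_ne (w p.1 p.2.1 (xs i) (ys j)) 0 with h0 | h0
      · simp [h0]
      · exact mul_le_mul_of_nonneg_right (Finset.le_sup' (fun p : ℝ × ℝ × ℝ => p.2.2) (hsub p hp h0)) (hw _ _ _ _)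
  refine ⟨hne, ?_, ?_⟩
  · have hrw : ∑ i ∈ Finset.Icc 1 nx, ∑ j ∈ Finset.Icc 1 ny, m * B i j x y = m := by
      simp_rw [← Finset.mul_sum]
      rw [hBsum, mul_one]
    rw [← hm, ← hrw]
    refine Finset.sum_le_sum fun i hi => Finset.sum_le_sum fun j hj => ?_
    rcases eq_or_ne (B i j x y) 0 with h0 | h0
    · simp [h0]
    · obtain ⟨hi2, hj2⟩ := hBzero i hi j hj h0
      exact mul_le_mul_of_nonneg_right (key i hi2 j hj2).1 (hBnonneg i j)
  · have hrw : ∑ i ∈ Finset.Icc 1 nx, ∑ j ∈ Finset.Icc 1 ny, M * B i j x y = M := by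
      simp_rw [← Finset.mul_sum]
      rw [hBsum, mul_one]
    rw [← hM, ← hrw]
    refine Finset.sum_le_sum fun i hi => Finset.sum_le_sum fun j hj => ?_
    rcases eq_or_ne (B i j x y) 0 with h0 | h0
    · simp [h0]
    · obtain ⟨hi2, hj2⟩ := hBzero i hi j hj h0
      exact mul_le_mul_of_nonneg_right (key i hi2 j hj2).2 (hBnonneg i j)
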